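/- If (a,b) ∈ P₃, then the image H_Δ(a,b) = (a⁴, γ_{a,b}/a²) belongs to P = {(a,b) ∈ (1,2] × [1,2] : ab ≤ 2}, where γ_{a,b} = (ab + b − 2)/(a + 1 − ab). -/

import Mathlib

/-- The parameter region P₃. -/
def P3 : Set (ℝ × ℝ) :=
  {p | 1 < p.1 ∧ p.1 ≤ 2 ∧ 1 ≤ p.2 ∧ p.2 ≤ 2 ∧ p.1 * p.2 ≤ 2 ∧
    (2 + p.1 ^ 2 + p.1 ^ 3) / (1 + p.1 + p.1 ^ 3) ≤ p.2 ∧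
    p.2 ≤ 2 * (1 + p.1 + p.1 ^ 3) / (p.1 * (2 + p.1 ^ 2 + p.1 ^ 3))}

/-- The parameter region P. -/
def Pset : Set (ℝ × ℝ) :=
  {p | 1 < p.1 ∧ p.1 ≤ 2 ∧ 1 ≤ p.2 ∧ p.2 ≤ 2 ∧ p.1 * p.2 ≤ 2}

/-- The renormalization operator H_Δ. -/
noncomputable def HDelta (p : ℝ × ℝ) : ℝ × ℝ :=
  (p.1 ^ 4, (p.1 * p.2 + p.2 - 2) / (p.1 + 1 - p.1 * p.2) / p.1 ^ 2)

/-!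
The two curved boundaries of P₃ are level curves of γ: `b = (2 + a² + a³)/(1 + a + a³)` is
`γ_{a,b} = a²` and `b = 2(1 + a + a³)/(a(2 + a² + a³))` is `γ_{a,b} = 2/a³`, and γ is increasing
in `b` where `a + 1 - ab > 0`. So on P₃ we have `a² ≤ γ ≤ 2/a³`; this forces `a⁵ ≤ 2`, and the
image `(a⁴, γ/a²)` has second coordinate in `[1, 2/a⁵]` and product `a²γ ≤ 2/a`.
-/

noncomputable def gamma (a b : ℝ) : ℝ :=
  (a * b + b - 2) / (a + 1 - a * b)

theorem HDelta_eq (p : ℝ × ℝ) : HDelta p = (p.1 ^ 4, gamma p.1 p.2 / p.1 ^ 2) := rfl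

section LevelCurves

variable {a b : ℝ}

theorem sq_le_gamma_iff (ha : 0 < a) (hd : 0 < a + 1 - a * b) :
    a ^ 2 ≤ gamma a b ↔ (2 + a ^ 2 + a ^ 3) / (1 + a + a ^ 3) ≤ b := by
  rw [gamma, le_div_iff₀ hd, div_le_iff₀ (by positivity)]
  constructor <;> intro h <;> linarith

theorem gamma_le_two_div_pow_three_iff (ha : 0 < a) (hd : 0 < a + 1 - a * b) :
    gamma a b ≤ 2 / a ^ 3 ↔ b ≤ 2 * (1 + a + a ^ 3) / (a * (2 + a ^ 2 + a ^ 3)) := by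
  rw [gamma, div_le_div_iff₀ hd (by positivity), le_div_iff₀ (by positivity)]
  constructor <;> intro h <;> linarith

end LevelCurves

theorem pow_four_mem_Pset_of_sq_le_of_le_two_div_pow_three {a g : ℝ} (ha : 1 < a)
    (hlo : a ^ 2 ≤ g) (hhi : g ≤ 2 / a ^ 3) : (a ^ 4, g / a ^ 2) ∈ Pset := by
  have ha0 : 0 < a := one_pos.trans ha
  have ha5 : a ^ 5 ≤ 2 := by
    have := (le_div_iff₀ (by positivity)).1 (hlo.trans hhi)
    linarith [pow_add a 2 3]
  have hc1 : 1 ≤ g / a ^ 2 := (one_le_div (by positivity)).2 hlo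
  have hc5 : g / a ^ 2 * a ^ 5 ≤ 2 := by
    have hga : g * a ^ 3 ≤ 2 := (le_div_iff₀ (by positivity)).1 hhi
    calc g / a ^ 2 * a ^ 5 = g * a ^ 3 := by field_simp
      _ ≤ 2 := hga
  have h45 : a ^ 4 ≤ a ^ 5 := pow_le_pow_right₀ ha.le (by norm_num)
  refine ⟨one_lt_pow₀ ha (by norm_num), h45.trans ha5, hc1, ?_, ?_⟩
  · calc g / a ^ 2 ≤ g / a ^ 2 * a ^ 5 :=
          le_mul_of_one_le_right (by positivity) (one_le_pow₀ ha.le)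
      _ ≤ 2 := hc5
  · calc a ^ 4 * (g / a ^ 2) ≤ a ^ 5 * (g / a ^ 2) := by gcongr
      _ ≤ 2 := by linarith

theorem HDelta_maps_P3_into_P : ∀ p ∈ P3, HDelta p ∈ Pset := by
  rintro ⟨a, b⟩ ⟨ha, -, -, -, hab, hlo, hhi⟩
  have ha0 : 0 < a := one_pos.trans ha
  have hd : 0 < a + 1 - a * b := by linarith
  rw [HDelta_eq]
  exact pow_four_mem_Pset_of_sq_le_of_le_two_div_pow_three ha
    ((sq_le_gamma_iff ha0 hd).2 hlo) ((gamma_le_two_div_pow_three_iff ha0 hd).2 hhi)
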